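/- arXiv:1302.3145 — 7 statements merged into one kernel-verified Lean document; each statement's English description precedes it below -/
import Mathlib

section
/- If τ ≤ 1/4, then no two τ-narrow s-t cuts cross; that is, for any two τ-narrow s-t cuts U and W, either U ⊆ W or W ⊆ U. -/
open Finset

variable {V : Type*} [Fintype V] [DecidableEq V]

/-- Total `x`-weight of arcs from `A` to `B`. -/
def flowBtw (x : V → V → ℝ) (A B : Finset V) : ℝ := ∑ u ∈ A, ∑ v ∈ B, x u v

/-- `x(∂⁺(U))`: weight of arcs leaving `U`. -/
def cutOut (x : V → V → ℝ) (U : Finset V) : ℝ := flowBtw x U Uᶜ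

/-- `x(∂⁻(U))`: weight of arcs entering `U`. -/
def cutIn (x : V → V → ℝ) (U : Finset V) : ℝ := flowBtw x Uᶜ U

/-- Feasibility for the ATSPP subtour elimination LP on the complete digraph on `V`. -/
structure FeasLP (s t : V) (x : V → V → ℝ) : Prop where
  nonneg : ∀ u v, 0 ≤ x u v
  diag : ∀ v, x v v = 0
  outS : ∑ v, x s v = 1
  inS : ∑ v, x v s = 0
  inT : ∑ v, x v t = 1
  outT : ∑ v, x t v = 0
  outDeg : ∀ v, v ≠ s → v ≠ t → ∑ w, x v w = 1
  inDeg : ∀ v, v ≠ s → v ≠ t → ∑ w, x w v = 1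
  cut : ∀ U : Finset V, s ∈ U → U ≠ Finset.univ → 1 ≤ cutOut x U

/-- A `τ`-narrow `s`-`t` cut: `s ∈ U`, `t ∉ U`, and `x(∂⁺(U)) < 1 + τ`. -/
def NarrowCut (s t : V) (x : V → V → ℝ) (τ : ℝ) (U : Finset V) : Prop :=
  s ∈ U ∧ t ∉ U ∧ cutOut x U < 1 + τ

lemma flowBtw_nonneg (x : V → V → ℝ) (hx : ∀ u v, 0 ≤ x u v) (A B : Finset V) :
    0 ≤ flowBtw x A B :=
  Finset.sum_nonneg fun _ _ => Finset.sum_nonneg fun _ _ => hx _ _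

lemma flowBtw_union_left (x : V → V → ℝ) {A A' : Finset V} (h : Disjoint A A') (B : Finset V) :
    flowBtw x (A ∪ A') B = flowBtw x A B + flowBtw x A' B := by
  simp [flowBtw, Finset.sum_union h]

lemma flowBtw_union_right (x : V → V → ℝ) (A : Finset V) {B B' : Finset V} (h : Disjoint B B') :
    flowBtw x A (B ∪ B') = flowBtw x A B + flowBtw x A B' := by
  simp [flowBtw, Finset.sum_union h, Finset.sum_add_distrib]

lemma cutOut_eq' (x : V → V → ℝ) (S : Finset V) :
    cutOut x S = (∑ v ∈ S, ∑ w, x v w) - flowBtw x S S := by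
  unfold cutOut flowBtw
  rw [← Finset.sum_sub_distrib]
  refine Finset.sum_congr rfl fun v _ => ?_
  rw [eq_sub_iff_add_eq, add_comm, Finset.sum_add_sum_compl]

lemma cutIn_eq' (x : V → V → ℝ) (S : Finset V) :
    cutIn x S = (∑ v ∈ S, ∑ w, x w v) - flowBtw x S S := by
  unfold cutIn flowBtw
  rw [Finset.sum_comm]
  rw [show (∑ u ∈ S, ∑ v ∈ S, x u v) = ∑ v ∈ S, ∑ u ∈ S, x u v from Finset.sum_comm]
  rw [← Finset.sum_sub_distrib]
  refine Finset.sum_congr rfl fun v _ => ?_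
  rw [eq_sub_iff_add_eq, add_comm, Finset.sum_add_sum_compl]

lemma cutOut_balance {s t : V} {x : V → V → ℝ} (hx : FeasLP s t x) (U : Finset V)
    (hs : s ∈ U) (ht : t ∉ U) : cutOut x U = cutIn x U + 1 := by
  rw [cutOut_eq', cutIn_eq']
  have h2 : ∑ v ∈ U.erase s, ∑ w, x v w = ∑ v ∈ U.erase s, ∑ w, x w v := by
    refine Finset.sum_congr rfl fun v hv => ?_
    have hvs := Finset.ne_of_mem_erase hv
    have hvt : v ≠ t := fun h => ht (h ▸ Finset.mem_of_mem_erase hv)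
    rw [hx.outDeg v hvs hvt, hx.inDeg v hvs hvt]
  have h1 : ∑ v ∈ U, ∑ w, x v w = (∑ v ∈ U, ∑ w, x w v) + 1 := by
    rw [← Finset.add_sum_erase _ _ hs, ← Finset.add_sum_erase _ (fun v => ∑ w, x w v) hs,
      hx.outS, hx.inS, h2]
    ring
  linarith

theorem stmt2 (s t : V) (hst : s ≠ t) (x : V → V → ℝ) (hx : FeasLP s t x)
    (τ : ℝ) (hτ : τ ≤ 1/4)
    (U W : Finset V) (hU : NarrowCut s t x τ U) (hW : NarrowCut s t x τ W) :
    U ⊆ W ∨ W ⊆ U := by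
  obtain ⟨hsU, htU, hUn⟩ := hU
  obtain ⟨hsW, htW, hWn⟩ := hW
  by_contra hcon
  push_neg at hcon
  obtain ⟨b, hbU, hbW⟩ := Finset.not_subset.mp hcon.1
  obtain ⟨c, hcW, hcU⟩ := Finset.not_subset.mp hcon.2
  set I : Finset V := U ∩ W with hI
  set B : Finset V := U \ W with hB
  set C : Finset V := W \ U with hC
  set O : Finset V := (U ∪ W)ᶜ with hO
  -- decompositions
  have eU : I ∪ B = U := by ext v; simp [hI, hB]; tauto
  have eUc : C ∪ O = Uᶜ := by ext v; simp [hC, hO]; tauto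
  have eW : I ∪ C = W := by ext v; simp [hI, hC]; tauto
  have eWc : B ∪ O = Wᶜ := by ext v; simp [hB, hO]; tauto
  have eBc : I ∪ (C ∪ O) = Bᶜ := by ext v; simp [hI, hB, hC, hO]; tauto
  have eCc : I ∪ (B ∪ O) = Cᶜ := by ext v; simp [hI, hB, hC, hO]; tauto
  have eUW : I ∪ (B ∪ C) = U ∪ W := by ext v; simp [hI, hB, hC]; tauto
  -- disjointness
  have dIB : Disjoint I B := by rw [Finset.disjoint_left]; intro v h1 h2; simp [hI, hB] at *; tauto
  have dIC : Disjoint I C := by rw [Finset.disjoint_left]; intro v h1 h2; simp [hI, hC] at *; tauto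
  have dIO : Disjoint I O := by rw [Finset.disjoint_left]; intro v h1 h2; simp [hI, hO] at *; tauto
  have dBC : Disjoint B C := by rw [Finset.disjoint_left]; intro v h1 h2; simp [hB, hC] at *; tauto
  have dBO : Disjoint B O := by rw [Finset.disjoint_left]; intro v h1 h2; simp [hB, hO] at *; tauto
  have dCO : Disjoint C O := by rw [Finset.disjoint_left]; intro v h1 h2; simp [hC, hO] at *; tauto
  have dI_CO : Disjoint I (C ∪ O) := Finset.disjoint_union_right.mpr ⟨dIC, dIO⟩
  have dI_BO : Disjoint I (B ∪ O) := Finset.disjoint_union_right.mpr ⟨dIB, dIO⟩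
  have dI_BC : Disjoint I (B ∪ C) := Finset.disjoint_union_right.mpr ⟨dIB, dIC⟩
  -- expansions
  have cOutU : cutOut x U
      = flowBtw x I C + flowBtw x I O + (flowBtw x B C + flowBtw x B O) := by
    unfold cutOut
    rw [← eUc, ← eU, flowBtw_union_left x dIB, flowBtw_union_right x I dCO,
      flowBtw_union_right x B dCO]
  have cInU : cutIn x U
      = flowBtw x C I + flowBtw x C B + (flowBtw x O I + flowBtw x O B) := by
    unfold cutIn
    rw [← eUc, ← eU, flowBtw_union_left x dCO, flowBtw_union_right x C dIB,
      flowBtw_union_right x O dIB]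
  have cOutW : cutOut x W
      = flowBtw x I B + flowBtw x I O + (flowBtw x C B + flowBtw x C O) := by
    unfold cutOut
    rw [← eWc, ← eW, flowBtw_union_left x dIC, flowBtw_union_right x I dBO,
      flowBtw_union_right x C dBO]
  have cInW : cutIn x W
      = flowBtw x B I + flowBtw x B C + (flowBtw x O I + flowBtw x O C) := by
    unfold cutIn
    rw [← eWc, ← eW, flowBtw_union_left x dBO, flowBtw_union_right x B dIC,
      flowBtw_union_right x O dIC]
  -- cut constraints
  have hbB : b ∈ B := by simp [hB, hbU, hbW]
  have hcC : c ∈ C := by simp [hC, hcW, hcU]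
  have h3 : (1:ℝ) ≤ flowBtw x I B + (flowBtw x C B + flowBtw x O B) := by
    have hs' : s ∈ Bᶜ := by simp [hB, hsW]
    have hne : Bᶜ ≠ Finset.univ := by
      intro h
      have : b ∈ Bᶜ := h.symm ▸ Finset.mem_univ b
      exact Finset.mem_compl.mp this hbB
    have hcut := hx.cut Bᶜ hs' hne
    unfold cutOut at hcut
    rw [compl_compl, ← eBc, flowBtw_union_left x dI_CO, flowBtw_union_left x dCO] at hcut
    exact hcut
  have h4 : (1:ℝ) ≤ flowBtw x I C + (flowBtw x B C + flowBtw x O C) := by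
    have hs' : s ∈ Cᶜ := by simp [hC, hsU]
    have hne : Cᶜ ≠ Finset.univ := by
      intro h
      have : c ∈ Cᶜ := h.symm ▸ Finset.mem_univ c
      exact Finset.mem_compl.mp this hcC
    have hcut := hx.cut Cᶜ hs' hne
    unfold cutOut at hcut
    rw [compl_compl, ← eCc, flowBtw_union_left x dI_BO, flowBtw_union_left x dBO] at hcut
    exact hcut
  have h5 : (1:ℝ) ≤ flowBtw x I O + (flowBtw x B O + flowBtw x C O) := by
    have hs' : s ∈ U ∪ W := Finset.mem_union_left _ hsU
    have htUW : t ∉ U ∪ W := by simp [htU, htW]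
    have hne : U ∪ W ≠ Finset.univ := by
      intro h
      exact htUW (h.symm ▸ Finset.mem_univ t)
    have hcut := hx.cut (U ∪ W) hs' hne
    unfold cutOut at hcut
    rw [← hO, ← eUW, flowBtw_union_left x dI_BC, flowBtw_union_left x dBC] at hcut
    exact hcut
  -- balance
  have balU := cutOut_balance hx U hsU htU
  have balW := cutOut_balance hx W hsW htW
  have nn := flowBtw_nonneg x hx.nonneg
  have h6 := cOutU ▸ hUn
  have h7 := cOutW ▸ hWn
  have h1 : flowBtw x C I + flowBtw x C B + (flowBtw x O I + flowBtw x O B) < τ := by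
    rw [← cInU]; linarith [balU, hUn]
  have h2 : flowBtw x B I + flowBtw x B C + (flowBtw x O I + flowBtw x O C) < τ := by
    rw [← cInW]; linarith [balW, hWn]
  linarith [h1, h2, h3, h4, h5, h6, h7, nn C I, nn O I, nn B I, nn I O, nn B C, nn C B,
    nn B O, nn C O, nn O B, nn O C]
end

section
/- Define z from x by: z_a = x_a / x(∂(L_i; L_{i+1})) if a ∈ ∂(L_i; L_{i+1}) for some i, z_a = x_a/(1 − 2τ) if both endpoints of a lie in a common layer L_i, and z_a = 0 otherwise (τ ≤ 1/4). Then for every τ-narrow s-t cut U_i, z(∂⁺(U_i)) = 1 and z(∂⁻(U_i)) = 0. -/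
open Finset

variable {V : Type*} [Fintype V] [DecidableEq V]

theorem stmt6 (s t : V) (hst : s ≠ t) (x z : V → V → ℝ) (hx : FeasLP s t x)
    (τ : ℝ) (hτ0 : 0 ≤ τ) (hτ : τ ≤ 1/4)
    (k : ℕ) (hk : 2 ≤ k) (Uc L : ℕ → Finset V)
    (hU1 : Uc 1 = {s}) (hUk : Uc k = Finset.univ \ {t})
    (hmono : ∀ i j, 1 ≤ i → i < j → j ≤ k → Uc i ⊂ Uc j)
    (hnarrow : ∀ i, 1 ≤ i → i ≤ k → NarrowCut s t x τ (Uc i))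
    (hall : ∀ W : Finset V, NarrowCut s t x τ W → ∃ i, 1 ≤ i ∧ i ≤ k ∧ W = Uc i)
    (hL1 : L 1 = {s}) (hLtop : L (k+1) = {t})
    (hL : ∀ i, 1 < i → i ≤ k → L i = Uc i \ Uc (i-1))
    (hpos : ∀ i, 1 ≤ i → i ≤ k → 0 < flowBtw x (L i) (L (i+1)))
    (hz1 : ∀ i, 1 ≤ i → i ≤ k → ∀ u ∈ L i, ∀ v ∈ L (i+1),
      z u v = x u v / flowBtw x (L i) (L (i+1)))
    (hz2 : ∀ i, 1 ≤ i → i ≤ k + 1 → ∀ u ∈ L i, ∀ v ∈ L i,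
      z u v = x u v / (1 - 2*τ))
    (hz0 : ∀ u v, (¬ ∃ i, 1 ≤ i ∧ i ≤ k ∧ u ∈ L i ∧ v ∈ L (i+1)) →
      (¬ ∃ i, 1 ≤ i ∧ i ≤ k + 1 ∧ u ∈ L i ∧ v ∈ L i) → z u v = 0) :
    ∀ i, 1 ≤ i → i ≤ k → cutOut z (Uc i) = 1 ∧ cutIn z (Uc i) = 0 := by
  -- (A) lower layers are inside the cut
  have hA : ∀ j i, 1 ≤ j → j ≤ i → i ≤ k → L j ⊆ Uc i := by
    intro j i hj hji hik
    have hsub : Uc j ⊆ Uc i := by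
      rcases eq_or_lt_of_le hji with h | h
      · exact h ▸ le_refl _
      · exact (hmono j i hj h hik).subset
    rcases eq_or_lt_of_le hj with h | h
    · subst h; rw [hL1, ← hU1]; exact hsub
    · rw [hL j h (le_trans hji hik)]
      exact (Finset.sdiff_subset).trans hsub
  -- (B) higher layers are outside the cut
  have hB : ∀ i j, 1 ≤ i → i < j → j ≤ k + 1 → ∀ v ∈ L j, v ∉ Uc i := by
    intro i j hi hij hjk v hv
    rcases eq_or_lt_of_le hjk with h | h
    · subst h
      rw [hLtop, Finset.mem_singleton] at hv
      subst hv
      exact (hnarrow i hi (Nat.lt_succ_iff.mp hij)).2.1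
    · have hjk' : j ≤ k := Nat.lt_succ_iff.mp h
      have h1j : 1 < j := lt_of_le_of_lt hi hij
      rw [hL j h1j hjk', Finset.mem_sdiff] at hv
      intro hvU
      apply hv.2
      have hij' : i ≤ j - 1 := Nat.le_sub_one_of_lt hij
      rcases eq_or_lt_of_le hij' with h2 | h2
      · exact h2 ▸ hvU
      · exact (hmono i (j-1) hi h2 (Nat.le_trans (Nat.sub_le _ _) hjk')).subset hvU
  intro i hi hik
  constructor
  · -- cutOut = 1
    have hzero : ∀ p ∈ Uc i ×ˢ (Uc i)ᶜ, p ∉ L i ×ˢ L (i+1) → z p.1 p.2 = 0 := by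
      rintro ⟨u, v⟩ hp hnp
      rw [Finset.mem_product] at hp hnp
      rw [Finset.mem_compl] at hp
      apply hz0
      · rintro ⟨j, hj1, hjk, huj, hvj⟩
        have hji : j ≤ i := by
          by_contra h
          exact hB i j hi (lt_of_not_ge h) (Nat.le_succ_of_le hjk) u huj hp.1
        have hij : i ≤ j := by
          by_contra h
          have : j + 1 ≤ i := Nat.succ_le_of_lt (lt_of_not_ge h)
          exact hp.2 (hA (j+1) i (Nat.le_succ_of_le hj1) this hik hvj)
        have : j = i := le_antisymm hji hij
        subst this
        exact hnp ⟨huj, hvj⟩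
      · rintro ⟨j, hj1, hjk, huj, hvj⟩
        have hji : j ≤ i := by
          by_contra h
          exact hB i j hi (lt_of_not_ge h) hjk u huj hp.1
        exact hp.2 (hA j i hj1 hji hik hvj)
    have hsub : L i ×ˢ L (i+1) ⊆ Uc i ×ˢ (Uc i)ᶜ := by
      rintro ⟨u, v⟩ hp
      rw [Finset.mem_product] at hp ⊢
      refine ⟨hA i i hi le_rfl hik hp.1, Finset.mem_compl.mpr ?_⟩
      exact hB i (i+1) hi (Nat.lt_succ_self i) (Nat.succ_le_succ hik) v hp.2
    have hF := hpos i hi hik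
    calc cutOut z (Uc i)
        = ∑ p ∈ Uc i ×ˢ (Uc i)ᶜ, z p.1 p.2 := by
          rw [cutOut, flowBtw, Finset.sum_product]
      _ = ∑ p ∈ L i ×ˢ L (i+1), z p.1 p.2 := (Finset.sum_subset hsub hzero).symm
      _ = ∑ u ∈ L i, ∑ v ∈ L (i+1), z u v := Finset.sum_product _ _ _
      _ = ∑ u ∈ L i, ∑ v ∈ L (i+1), x u v / flowBtw x (L i) (L (i+1)) := by
          apply Finset.sum_congr rfl; intro u hu
          apply Finset.sum_congr rfl; intro v hv
          exact hz1 i hi hik u hu v hv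
      _ = (∑ u ∈ L i, ∑ v ∈ L (i+1), x u v) / flowBtw x (L i) (L (i+1)) := by
          rw [Finset.sum_div]
          apply Finset.sum_congr rfl; intro u _
          rw [Finset.sum_div]
      _ = 1 := div_self (ne_of_gt hF)
  · -- cutIn = 0
    rw [cutIn, flowBtw]
    apply Finset.sum_eq_zero; intro u hu
    apply Finset.sum_eq_zero; intro v hv
    rw [Finset.mem_compl] at hu
    apply hz0
    · rintro ⟨j, hj1, hjk, huj, hvj⟩
      have h1 : ¬ j ≤ i := fun h => hu (hA j i hj1 h hik huj)
      have h2 : j + 1 ≤ i := by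
        by_contra h
        exact hB i (j+1) hi (lt_of_not_ge h) (Nat.succ_le_succ hjk) v hvj hv
      omega
    · rintro ⟨j, hj1, hjk, huj, hvj⟩
      have h1 : ¬ j ≤ i := fun h => hu (hA j i hj1 h hik huj)
      have h2 : ¬ i < j := fun h => hB i j hi h hjk v hvj hv
      omega
end

section
/- Hoffman's circulation theorem: in a finite directed graph D = (V,A) with lower bounds ℓ_a and upper bounds u_a on arcs with 0 ≤ ℓ_a ≤ u_a, there exists a circulation f : A → ℝ≥0 (flow conservation at every vertex) with ℓ_a ≤ f(a) ≤ u_a for all a, if and only if ℓ(∂⁺(U)) ≤ u(∂⁻(U)) for all U ⊆ V. Moreover, if ℓ and u are integral, f can be chosen integral. -/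
open Finset

variable {V : Type*} [Fintype V] [DecidableEq V]

/-- `f` is a circulation: flow conservation at every vertex. -/
def IsCirculation (f : V → V → ℝ) : Prop := ∀ v : V, ∑ u, f u v = ∑ w, f v w

/-!
Consider the flows in the box `lo ≤ f ≤ hi` with values in a closed additive subgroup `G` of `ℝ`
(all of `ℝ`, or the integers for the integral statement). They form a compact set, so one of them
minimizes the surplus `∑ v, (excess f v)⁺`. If it were not a circulation, look at the vertices
reachable along residual arcs from a vertex of positive excess. If one of them has negative
excess, pushing flow along the path, by amounts that stay in `G`, lowers the surplus. Otherwise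
every arc leaving this set is at its upper bound and every arc entering it at its lower bound,
and the cut condition for its complement says the total excess on the set is `≤ 0`, although it
is positive.
-/

theorem Relation.ReflTransGen.restrict_ne_start {α : Type*} {r : α → α → Prop} {a b : α}
    (h : Relation.ReflTransGen r a b) : Relation.ReflTransGen (fun x y ↦ r x y ∧ y ≠ a) a b := by
  induction h with
  | refl => exact .refl
  | @tail _ c _ hbc ih =>
    by_cases hc : c = a
    · exact hc ▸ .refl
    · exact ih.tail ⟨hbc, hc⟩

namespace Hoffman

variable {lo hi f g : V → V → ℝ} {G : AddSubgroup ℝ}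

def excess (f : V → V → ℝ) (v : V) : ℝ := ∑ u, f u v - ∑ w, f v w

def surplus (f : V → V → ℝ) : ℝ := ∑ v, (excess f v)⁺

def IsResidual (lo hi f : V → V → ℝ) (u v : V) : Prop := f u v < hi u v ∨ lo v u < f v u

def feasibleFlows (lo hi : V → V → ℝ) (G : AddSubgroup ℝ) : Set (V → V → ℝ) :=
  Set.univ.pi fun u ↦ Set.univ.pi fun v ↦ Set.Icc (lo u v) (hi u v) ∩ G

def addArc (f : V → V → ℝ) (a b : V) (ε : ℝ) : V → V → ℝ :=
  fun u v ↦ f u v + if u = a ∧ v = b then ε else 0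

omit [Fintype V] [DecidableEq V] in
lemma mem_feasibleFlows :
    f ∈ feasibleFlows lo hi G ↔ ∀ u v, (lo u v ≤ f u v ∧ f u v ≤ hi u v) ∧ f u v ∈ G := by
  simp [feasibleFlows]

omit [Fintype V] [DecidableEq V] in
lemma isCompact_feasibleFlows (hG : IsClosed (G : Set ℝ)) : IsCompact (feasibleFlows lo hi G) :=
  isCompact_univ_pi fun _ ↦ isCompact_univ_pi fun _ ↦ isCompact_Icc.inter_right hG

omit [DecidableEq V] in
lemma continuous_surplus : Continuous (surplus : (V → V → ℝ) → ℝ) := by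
  unfold surplus excess
  fun_prop

omit [DecidableEq V] in
lemma excess_mem (hf : f ∈ feasibleFlows lo hi G) (v : V) : excess f v ∈ G :=
  sub_mem (sum_mem fun u _ ↦ (mem_feasibleFlows.1 hf u v).2)
    (sum_mem fun w _ ↦ (mem_feasibleFlows.1 hf v w).2)

lemma sum_excess_eq (f : V → V → ℝ) (U : Finset V) :
    ∑ v ∈ U, excess f v = cutIn f U - cutOut f U := by
  simp only [excess, cutIn, cutOut, flowBtw, sum_sub_distrib]
  simp_rw [← sum_compl_add_sum U, sum_add_distrib]
  rw [sum_comm (s := Uᶜ), sum_comm (s := U) (t := U)]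
  ring

lemma sum_excess (f : V → V → ℝ) : ∑ v, excess f v = 0 := by
  simp [sum_excess_eq, cutIn, cutOut, flowBtw]

lemma excess_addArc (f : V → V → ℝ) (a b : V) (ε : ℝ) :
    excess (addArc f a b ε) = excess f + Pi.single b ε - Pi.single a ε := by
  ext v
  simp [excess, addArc, sum_add_distrib, ite_and, Pi.single_apply]
  ring

omit [Fintype V] in
lemma addArc_apply_self (f : V → V → ℝ) (a b : V) (ε : ℝ) : addArc f a b ε a b = f a b + ε := by
  simp [addArc]

omit [Fintype V] in
lemma addArc_apply_of_ne {a b u v : V} (ε : ℝ) (h : ¬(u = a ∧ v = b)) :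
    addArc f a b ε u v = f u v := by
  simp [addArc, h]

omit [Fintype V] in
lemma le_addArc {ε : ℝ} (hε : 0 ≤ ε) (a b u v : V) : f u v ≤ addArc f a b ε u v := by
  unfold addArc
  split_ifs <;> linarith

omit [Fintype V] in
lemma addArc_le {ε : ℝ} (hε : ε ≤ 0) (a b u v : V) : addArc f a b ε u v ≤ f u v := by
  unfold addArc
  split_ifs <;> linarith

omit [Fintype V] in
lemma addArc_mem_feasibleFlows {a b : V} {ε : ℝ} (hf : f ∈ feasibleFlows lo hi G)
    (hlo : lo a b ≤ f a b + ε) (hhi : f a b + ε ≤ hi a b) (hε : ε ∈ G) :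
    addArc f a b ε ∈ feasibleFlows lo hi G := by
  rw [mem_feasibleFlows] at hf ⊢
  intro u v
  by_cases h : u = a ∧ v = b
  · obtain ⟨rfl, rfl⟩ := h
    rw [addArc_apply_self]
    exact ⟨⟨hlo, hhi⟩, add_mem (hf u v).2 hε⟩
  · rw [addArc_apply_of_ne ε h]
    exact hf u v

omit [Fintype V] [DecidableEq V] in
lemma IsResidual.mono {a b : V} (h : IsResidual lo hi f a b) (hab : g a b ≤ f a b)
    (hba : f b a ≤ g b a) : IsResidual lo hi g a b :=
  h.imp hab.trans_lt fun h' ↦ h'.trans_le hba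

lemma exists_push (hloG : ∀ u v, lo u v ∈ G) (hhiG : ∀ u v, hi u v ∈ G) {x y : V} {δ : ℝ}
    (hf : f ∈ feasibleFlows lo hi G)
    (hxy : IsResidual lo hi f x y) (hδ : 0 < δ) (hδG : δ ∈ G) :
    ∃ g ∈ feasibleFlows lo hi G, ∃ ε, 0 < ε ∧ ε ≤ δ ∧
      excess g = excess f + Pi.single y ε - Pi.single x ε ∧
      ∀ a b, b ≠ y → IsResidual lo hi f a b → IsResidual lo hi g a b := by
  have hfG := mem_feasibleFlows.1 hf
  rcases hxy with hfwd | hbwd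
  · set ε := min δ (hi x y - f x y)
    have hε : 0 < ε := lt_min hδ (sub_pos.2 hfwd)
    refine ⟨addArc f x y ε, addArc_mem_feasibleFlows hf ?_ ?_ ?_, ε, hε, min_le_left _ _,
      excess_addArc f x y ε, fun a b hb h ↦ h.mono ?_ (le_addArc hε.le x y b a)⟩
    · linarith [(hfG x y).1.1]
    · linarith [min_le_right δ (hi x y - f x y)]
    · exact min_rec' (· ∈ G) hδG (sub_mem (hhiG x y) (hfG x y).2)
    · rw [addArc_apply_of_ne ε fun h ↦ hb h.2]
  · set ε := min δ (f y x - lo y x)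
    have hε : 0 < ε := lt_min hδ (sub_pos.2 hbwd)
    refine ⟨addArc f y x (-ε), addArc_mem_feasibleFlows hf ?_ ?_ ?_, ε, hε, min_le_left _ _,
      ?_, fun a b hb h ↦ h.mono (addArc_le (by linarith) y x a b) ?_⟩
    · linarith [min_le_right δ (f y x - lo y x)]
    · linarith [(hfG y x).1.2]
    · exact neg_mem (min_rec' (· ∈ G) hδG (sub_mem (hfG y x).2 (hloG y x)))
    · rw [excess_addArc, Pi.single_neg, Pi.single_neg]
      abel
    · rw [addArc_apply_of_ne _ fun h ↦ hb h.1]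

section Surplus

variable {x y : V} {ε : ℝ}

lemma sum_posPart_push :
    ∑ v, ((excess f v)⁺ + (Pi.single y ε - Pi.single x ε : V → ℝ) v) = surplus f := by
  simp [surplus, sum_add_distrib, sum_sub_distrib]

variable (hexc : excess g = excess f + Pi.single y ε - Pi.single x ε)
include hexc

lemma posPart_excess_le_of_push (hε : 0 ≤ ε) (hx : ε ≤ excess f x) (v : V) :
    (excess g v)⁺ ≤ (excess f v)⁺ + (Pi.single y ε - Pi.single x ε : V → ℝ) v := by
  simp only [hexc, Pi.add_apply, Pi.sub_apply, Pi.single_apply, posPart_def]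
  split_ifs with hvy hvx hvx <;> subst_vars <;> grind

lemma surplus_le_of_push (hε : 0 ≤ ε) (hx : ε ≤ excess f x) : surplus g ≤ surplus f :=
  (sum_le_sum fun v _ ↦ posPart_excess_le_of_push hexc hε hx v).trans_eq sum_posPart_push

lemma surplus_lt_of_push (hε : 0 < ε) (hx : ε ≤ excess f x) (hy : excess f y < 0) :
    surplus g < surplus f := by
  have hxy : y ≠ x := by rintro rfl; linarith
  refine (sum_lt_sum (fun v _ ↦ posPart_excess_le_of_push hexc hε.le hx v)
    ⟨y, mem_univ y, ?_⟩).trans_eq sum_posPart_push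
  simp only [hexc, Pi.add_apply, Pi.sub_apply, Pi.single_eq_same, Pi.single_eq_of_ne hxy,
    posPart_def]
  grind

end Surplus

/-- The path from `x` only enters vertices of `S ∌ x`. After pushing along its first arc `x → y`,
the rest of the path, cut at its last visit of `y`, is still residual, so the induction runs
on `S`. -/
lemma exists_surplus_lt_of_reflTransGen (hloG : ∀ u v, lo u v ∈ G) (hhiG : ∀ u v, hi u v ∈ G)
    {w : V} (S : Finset V) {f : V → V → ℝ} {x : V} (hf : f ∈ feasibleFlows lo hi G) (hxS : x ∉ S)
    (hxw : Relation.ReflTransGen (fun a b ↦ IsResidual lo hi f a b ∧ b ∈ S) x w)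
    (hx : 0 < excess f x) (hw : excess f w < 0) :
    ∃ g ∈ feasibleFlows lo hi G, surplus g < surplus f := by
  induction S using Finset.strongInduction generalizing f x with
  | H S ih =>
    rcases hxw.cases_head with rfl | ⟨y, ⟨hxy, hyS⟩, hyw⟩
    · linarith
    obtain ⟨g, hg, ε, hε, hεx, hexc, hres⟩ := exists_push hloG hhiG hf hxy hx (excess_mem hf x)
    by_cases hy : excess f y < 0
    · exact ⟨g, hg, surplus_lt_of_push hexc hε hεx hy⟩
    have hyx : y ≠ x := ne_of_mem_of_not_mem hyS hxS
    have hgy : 0 < excess g y := by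
      rw [hexc, Pi.sub_apply, Pi.add_apply, Pi.single_eq_same, Pi.single_eq_of_ne hyx]
      linarith
    have hgw : excess g w = excess f w := by
      have hwy : w ≠ y := by rintro rfl; linarith
      have hwx : w ≠ x := by rintro rfl; linarith
      simp [hexc, Pi.single_eq_of_ne hwy, Pi.single_eq_of_ne hwx]
    have hyw' : Relation.ReflTransGen (fun a b ↦ IsResidual lo hi g a b ∧ b ∈ S.erase y) y w :=
      Relation.ReflTransGen.mono (fun a b ⟨⟨hab, hbS⟩, hby⟩ ↦
        ⟨hres a b hby hab, mem_erase.2 ⟨hby, hbS⟩⟩) _ _ hyw.restrict_ne_start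
    obtain ⟨g', hg', hlt⟩ := ih (S.erase y) (erase_ssubset hyS) hg (notMem_erase y S) hyw' hgy
      (hgw ▸ hw)
    exact ⟨g', hg', hlt.trans_le (surplus_le_of_push hexc hε.le hεx)⟩

lemma cutOut_compl (x : V → V → ℝ) (U : Finset V) : cutOut x Uᶜ = cutIn x U := by
  rw [cutOut, cutIn, compl_compl]

lemma cutIn_compl (x : V → V → ℝ) (U : Finset V) : cutIn x Uᶜ = cutOut x U := by
  rw [cutOut, cutIn, compl_compl]

omit [Fintype V] [DecidableEq V] in
lemma flowBtw_mono {x y : V → V → ℝ} (h : ∀ u v, x u v ≤ y u v) (A B : Finset V) :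
    flowBtw x A B ≤ flowBtw y A B :=
  sum_le_sum fun u _ ↦ sum_le_sum fun v _ ↦ h u v

lemma cutOut_le_cutIn_of_isCirculation (hf : ∀ u v, lo u v ≤ f u v ∧ f u v ≤ hi u v)
    (hcirc : IsCirculation f) (U : Finset V) : cutOut lo U ≤ cutIn hi U := by
  have hU : cutIn f U - cutOut f U = 0 := by
    rw [← sum_excess_eq]
    exact sum_eq_zero fun v _ ↦ sub_eq_zero.2 (hcirc v)
  have hout : cutOut lo U ≤ cutOut f U := flowBtw_mono (fun u v ↦ (hf u v).1) U Uᶜ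
  have hin : cutIn f U ≤ cutIn hi U := flowBtw_mono (fun u v ↦ (hf u v).2) Uᶜ U
  linarith

lemma sum_excess_nonpos_of_closed (hf : ∀ u v, lo u v ≤ f u v ∧ f u v ≤ hi u v)
    (hcut : ∀ U : Finset V, cutOut lo U ≤ cutIn hi U) {U : Finset V}
    (hU : ∀ u ∈ U, ∀ v ∉ U, ¬IsResidual lo hi f u v) : ∑ v ∈ U, excess f v ≤ 0 := by
  have hsat : ∀ u ∈ U, ∀ v ∈ Uᶜ, f u v = hi u v ∧ f v u = lo v u := fun u hu v hv ↦ by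
    have := not_or.1 (hU u hu v (mem_compl.1 hv))
    exact ⟨le_antisymm (hf u v).2 (not_lt.1 this.1), le_antisymm (not_lt.1 this.2) (hf v u).1⟩
  have hin : cutIn f U = cutIn lo U :=
    sum_congr rfl fun v hv ↦ sum_congr rfl fun u hu ↦ (hsat u hu v hv).2
  have hout : cutOut f U = cutOut hi U :=
    sum_congr rfl fun u hu ↦ sum_congr rfl fun v hv ↦ (hsat u hu v hv).1
  have := hcut Uᶜ
  rw [cutOut_compl, cutIn_compl] at this
  rw [sum_excess_eq, hin, hout]
  linarith

lemma isCirculation_of_forall_excess_nonpos (h : ∀ v, excess f v ≤ 0) : IsCirculation f := by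
  have hzero := (sum_eq_zero_iff_of_nonpos fun v _ ↦ h v).1 (sum_excess f)
  exact fun v ↦ sub_eq_zero.1 (hzero v (mem_univ v))

lemma isCirculation_of_isMinOn (hloG : ∀ u v, lo u v ∈ G) (hhiG : ∀ u v, hi u v ∈ G)
    (hcut : ∀ U : Finset V, cutOut lo U ≤ cutIn hi U) (hf : f ∈ feasibleFlows lo hi G)
    (hmin : IsMinOn surplus (feasibleFlows lo hi G) f) : IsCirculation f := by
  classical
  refine isCirculation_of_forall_excess_nonpos fun x ↦ not_lt.1 fun hx ↦ ?_
  set U := univ.filter (Relation.ReflTransGen (IsResidual lo hi f) x)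
  have hreach : ∀ w ∈ U, 0 ≤ excess f w := fun w hw ↦ not_lt.1 fun hw' ↦ by
    have hxw : Relation.ReflTransGen (fun a b ↦ IsResidual lo hi f a b ∧ b ∈ univ.erase x) x w :=
      Relation.ReflTransGen.mono (fun a b ⟨hab, hbx⟩ ↦ ⟨hab, mem_erase.2 ⟨hbx, mem_univ b⟩⟩) _ _
        (mem_filter.1 hw).2.restrict_ne_start
    obtain ⟨g, hg, hlt⟩ := exists_surplus_lt_of_reflTransGen hloG hhiG (univ.erase x) hf
      (notMem_erase x univ) hxw hx hw'
    exact (hmin hg).not_gt hlt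
  have hclosed : ∀ u ∈ U, ∀ v ∉ U, ¬IsResidual lo hi f u v := fun u hu v hv huv ↦
    hv (mem_filter.2 ⟨mem_univ v, (mem_filter.1 hu).2.tail huv⟩)
  have hpos : 0 < ∑ v ∈ U, excess f v :=
    sum_pos' hreach ⟨x, mem_filter.2 ⟨mem_univ x, .refl⟩, hx⟩
  linarith [sum_excess_nonpos_of_closed (fun u v ↦ (mem_feasibleFlows.1 hf u v).1) hcut hclosed]

theorem exists_isCirculation_mem_feasibleFlows (hG : IsClosed (G : Set ℝ))
    (hloG : ∀ u v, lo u v ∈ G) (hhiG : ∀ u v, hi u v ∈ G) (hle : ∀ u v, lo u v ≤ hi u v)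
    (hcut : ∀ U : Finset V, cutOut lo U ≤ cutIn hi U) :
    ∃ f ∈ feasibleFlows lo hi G, IsCirculation f := by
  have hlo : lo ∈ feasibleFlows lo hi G :=
    mem_feasibleFlows.2 fun u v ↦ ⟨⟨le_rfl, hle u v⟩, hloG u v⟩
  obtain ⟨f, hf, hmin⟩ := (isCompact_feasibleFlows hG).exists_isMinOn ⟨lo, hlo⟩
    continuous_surplus.continuousOn
  exact ⟨f, hf, isCirculation_of_isMinOn hloG hhiG hcut hf hmin⟩

end Hoffman

theorem stmt8 (lo hi : V → V → ℝ) (hbounds : ∀ u v, 0 ≤ lo u v ∧ lo u v ≤ hi u v) :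
    ((∃ f : V → V → ℝ, (∀ u v, lo u v ≤ f u v ∧ f u v ≤ hi u v) ∧ IsCirculation f) ↔
      (∀ U : Finset V, cutOut lo U ≤ cutIn hi U)) ∧
    ((∀ u v, ∃ n : ℤ, lo u v = n) → (∀ u v, ∃ n : ℤ, hi u v = n) →
      (∀ U : Finset V, cutOut lo U ≤ cutIn hi U) →
      ∃ f : V → V → ℝ, (∀ u v, ∃ n : ℤ, f u v = n) ∧
        (∀ u v, lo u v ≤ f u v ∧ f u v ≤ hi u v) ∧ IsCirculation f) := by
  have hle u v := (hbounds u v).2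
  refine ⟨⟨fun ⟨f, hf, hcirc⟩ ↦ Hoffman.cutOut_le_cutIn_of_isCirculation hf hcirc, fun hcut ↦ ?_⟩,
    fun hlo hhi hcut ↦ ?_⟩
  · obtain ⟨f, hf, hcirc⟩ := Hoffman.exists_isCirculation_mem_feasibleFlows (G := ⊤)
      isClosed_univ (fun _ _ ↦ trivial) (fun _ _ ↦ trivial) hle hcut
    exact ⟨f, fun u v ↦ (Hoffman.mem_feasibleFlows.1 hf u v).1, hcirc⟩
  · have hmem {x : ℝ} : x ∈ (Int.castAddHom ℝ).range ↔ ∃ n : ℤ, x = n := by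
      rw [AddMonoidHom.mem_range, Int.coe_castAddHom]
      exact exists_congr fun _ ↦ eq_comm
    have hclosed : IsClosed ((Int.castAddHom ℝ).range : Set ℝ) := by
      rw [AddMonoidHom.coe_range, Int.coe_castAddHom]
      exact Real.isClosed_range_intCast
    obtain ⟨f, hf, hcirc⟩ := Hoffman.exists_isCirculation_mem_feasibleFlows hclosed
      (fun u v ↦ hmem.2 (hlo u v)) (fun u v ↦ hmem.2 (hhi u v)) hle hcut
    exact ⟨f, fun u v ↦ hmem.1 (Hoffman.mem_feasibleFlows.1 hf u v).2,
      fun u v ↦ (Hoffman.mem_feasibleFlows.1 hf u v).1, hcirc⟩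
end

section
/- Let ℓ, u be the bounds used in the patching step: ℓ_a = 1 if a ∈ 𝒜 or a = ts, ℓ_a = 0 otherwise; u_{ts} = 1, u_a = 1 + (1 + 1/τ)·α·x_a for a ∈ 𝒜, u_a = (1 + 1/τ)·α·x_a otherwise. Suppose 𝒜 is α-thin with respect to x (|𝒜 ∩ ∂⁺(U)| ≤ α·x(∂⁺(U)) for all nonempty proper U), α ≥ 1, 0 < τ ≤ 1/4, every τ-narrow s-t cut U satisfies |𝒜 ∩ ∂⁺(U)| = 1, and x is a feasible ATSPP LP solution. Then for every subset U ⊆ V, ℓ(∂⁺(U)) ≤ u(∂⁻(U)). -/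
open Finset

variable {V : Type*} [Fintype V] [DecidableEq V]

/-!
Write `N = |𝒜 ∩ ∂⁺(U)|` and `c = (1 + 1/τ) α`. The left side is at most `N` plus one if `ts` leaves
`U`, the right side is at least `c · x(∂⁻(U))` plus one if `ts` enters `U`, and flow conservation gives
`x(∂⁺(U)) = x(∂⁻(U)) + [s ∈ U] - [t ∈ U]`. Thinness `N ≤ α x(∂⁺(U))` then settles every cut except a
non-narrow `s`-`t` cut, where `x(∂⁻(U)) ≥ τ` pays for the extra `α` through the `α/τ` term, and a narrow
`s`-`t` cut, where `N = 1` is matched by the arc `ts` entering `U`.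
-/

lemma cutOut_compl (x : V → V → ℝ) (U : Finset V) : cutOut x Uᶜ = cutIn x U := by
  simp only [cutOut, cutIn, compl_compl]

lemma cutIn_nonneg {x : V → V → ℝ} (hx : ∀ u v, 0 ≤ x u v) (U : Finset V) : 0 ≤ cutIn x U :=
  sum_nonneg fun u _ => sum_nonneg fun v _ => hx u v

lemma cutOut_sub_cutIn (x : V → V → ℝ) (U : Finset V) :
    cutOut x U - cutIn x U = ∑ u ∈ U, ((∑ v, x u v) - ∑ v, x v u) := by
  have hOut : cutOut x U + flowBtw x U U = ∑ u ∈ U, ∑ v, x u v := by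
    rw [cutOut, flowBtw, flowBtw, ← sum_add_distrib]
    exact sum_congr rfl fun u _ => by rw [add_comm, sum_add_sum_compl]
  have hIn : cutIn x U + flowBtw x U U = ∑ u ∈ U, ∑ v, x v u := by
    rw [cutIn, flowBtw, flowBtw, sum_comm, sum_comm (s := U) (t := U), ← sum_add_distrib]
    exact sum_congr rfl fun u _ => by rw [add_comm, sum_add_sum_compl]
  rw [sum_sub_distrib]
  linarith

lemma sum_sum_ite_mem_eq_card (𝒜 : Finset (V × V)) (U : Finset V) :
    ∑ u ∈ U, ∑ v ∈ Uᶜ, (if (u, v) ∈ 𝒜 then (1 : ℝ) else 0)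
      = ((𝒜.filter (fun a => a.1 ∈ U ∧ a.2 ∉ U)).card : ℝ) := by
  rw [← sum_product', sum_boole]
  congr 2
  ext a
  simp only [mem_filter, mem_product, mem_compl]
  tauto

lemma sum_sum_ite_eq_pair {ι : Type*} [DecidableEq ι] (t s : ι) (A B : Finset ι) :
    ∑ u ∈ A, ∑ v ∈ B, (if u = t ∧ v = s then (1 : ℝ) else 0)
      = if t ∈ A ∧ s ∈ B then 1 else 0 := by
  simp only [ite_and, sum_ite_irrel, sum_ite_eq', sum_const_zero]

namespace FeasLP

variable {s t : V} {x : V → V → ℝ}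

lemma source_ne_target (hx : FeasLP s t x) : s ≠ t := by
  rintro rfl
  have h := hx.outS
  rw [hx.outT] at h
  exact zero_ne_one h

lemma target_source_eq_zero (hx : FeasLP s t x) : x t s = 0 :=
  (sum_eq_zero_iff_of_nonneg fun v _ => hx.nonneg t v).mp hx.outT s (mem_univ s)

lemma cutOut_sub_cutIn_eq (hx : FeasLP s t x) (U : Finset V) :
    cutOut x U - cutIn x U = (if s ∈ U then 1 else 0) - (if t ∈ U then 1 else 0) := by
  have hexcess : ∀ u, (∑ v, x u v) - ∑ v, x v u = (if u = s then 1 else 0) - (if u = t then 1 else 0) := by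
    intro u
    by_cases hs : u = s
    · subst hs; simp [hx.outS, hx.inS, hx.source_ne_target]
    by_cases ht : u = t
    · subst ht; simp [hx.outT, hx.inT, hx.source_ne_target.symm]
    simp [hs, ht, hx.outDeg u hs ht, hx.inDeg u hs ht]
  simp_rw [cutOut_sub_cutIn, hexcess, sum_sub_distrib, sum_ite_eq']

lemma one_le_cutIn_of_target_mem (hx : FeasLP s t x) {U : Finset V} (hs : s ∉ U) (ht : t ∈ U) :
    1 ≤ cutIn x U := by
  have hUc : Uᶜ ≠ univ := fun h => (mem_compl.mp (h ▸ mem_univ t)) ht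
  simpa only [cutOut_compl] using hx.cut Uᶜ (mem_compl.mpr hs) hUc

/-- `N` plays the role of `|𝒜 ∩ ∂⁺(U)|`. -/
lemma add_le_of_le_cutOut (hx : FeasLP s t x) {τ α N : ℝ} (hτ0 : 0 < τ) (hα : 1 ≤ α)
    (U : Finset V) (hN : N ≤ α * cutOut x U) (hnarrow : NarrowCut s t x τ U → N = 1) :
    N + (if t ∈ U ∧ s ∉ U then 1 else 0)
      ≤ (1 + 1/τ) * α * cutIn x U + (if s ∈ U ∧ t ∉ U then 1 else 0) := by
  have hCO : cutOut x U = cutIn x U + ((if s ∈ U then 1 else 0) - (if t ∈ U then 1 else 0)) := by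
    linarith [hx.cutOut_sub_cutIn_eq U]
  rw [hCO, mul_add] at hN
  have hCI := cutIn_nonneg hx.nonneg U
  have hsplit : (1 + 1/τ) * α * cutIn x U = α * cutIn x U + 1/τ * α * cutIn x U := by ring
  have hαCI : 0 ≤ α * cutIn x U := mul_nonneg (by linarith) hCI
  have hslack : 0 ≤ 1/τ * α * cutIn x U := by positivity
  rw [hsplit]
  by_cases hs : s ∈ U <;> by_cases ht : t ∈ U <;>
    simp only [hs, ht, not_true_eq_false, not_false_eq_true, and_true, and_false, if_true,
      if_false] at hN hCO ⊢
  · linarith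
  · by_cases hnar : cutOut x U < 1 + τ
    · linarith [hnarrow ⟨hs, ht, hnar⟩]
    · have hτα : α ≤ 1/τ * α * cutIn x U :=
        calc α = 1/τ * α * τ := by field_simp
          _ ≤ 1/τ * α * cutIn x U := by gcongr; linarith
      linarith
  · linarith [hx.one_le_cutIn_of_target_mem hs ht]
  · linarith

end FeasLP

lemma card_filter_cut_le {x : V → V → ℝ} {α : ℝ} {𝒜 : Finset (V × V)}
    (hthin : ∀ U : Finset V, U.Nonempty → U ≠ univ →
      ((𝒜.filter (fun a => a.1 ∈ U ∧ a.2 ∉ U)).card : ℝ) ≤ α * cutOut x U)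
    (U : Finset V) :
    ((𝒜.filter (fun a => a.1 ∈ U ∧ a.2 ∉ U)).card : ℝ) ≤ α * cutOut x U := by
  rcases U.eq_empty_or_nonempty with rfl | hU
  · simp [cutOut, flowBtw]
  by_cases hUu : U = univ
  · subst hUu; simp [cutOut, flowBtw]
  exact hthin U hU hUu

theorem stmt9_general (s t : V) (x : V → V → ℝ) (hx : FeasLP s t x)
    (τ α : ℝ) (hτ0 : 0 < τ) (hα : 1 ≤ α)
    (𝒜 : Finset (V × V))
    (hthin : ∀ U : Finset V, U.Nonempty → U ≠ Finset.univ →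
      ((𝒜.filter (fun a => a.1 ∈ U ∧ a.2 ∉ U)).card : ℝ) ≤ α * cutOut x U)
    (hnarrowOne : ∀ U : Finset V, NarrowCut s t x τ U →
      (𝒜.filter (fun a => a.1 ∈ U ∧ a.2 ∉ U)).card = 1) :
    ∀ U : Finset V,
      (∑ u ∈ U, ∑ v ∈ Uᶜ, (if (u, v) ∈ 𝒜 ∨ (u = t ∧ v = s) then (1 : ℝ) else 0)) ≤
      (∑ u ∈ Uᶜ, ∑ v ∈ U, (if u = t ∧ v = s then (1 : ℝ)
        else if (u, v) ∈ 𝒜 then 1 + (1 + 1/τ) * α * x u v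
        else (1 + 1/τ) * α * x u v)) := by
  intro U
  set c := (1 + 1/τ) * α
  have hc : 0 ≤ c := by positivity
  calc _ ≤ ∑ u ∈ U, ∑ v ∈ Uᶜ,
          ((if (u, v) ∈ 𝒜 then (1 : ℝ) else 0) + (if u = t ∧ v = s then 1 else 0)) := by
        gcongr with u _ v _
        split_ifs <;> simp_all
    _ = ((𝒜.filter (fun a => a.1 ∈ U ∧ a.2 ∉ U)).card : ℝ) + (if t ∈ U ∧ s ∉ U then 1 else 0) := by
        simp only [sum_add_distrib, sum_sum_ite_mem_eq_card, sum_sum_ite_eq_pair, mem_compl]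
    _ ≤ c * cutIn x U + (if s ∈ U ∧ t ∉ U then 1 else 0) :=
        hx.add_le_of_le_cutOut hτ0 hα U (card_filter_cut_le hthin U)
          fun h => by rw [hnarrowOne U h, Nat.cast_one]
    _ = ∑ u ∈ Uᶜ, ∑ v ∈ U, (c * x u v + if u = t ∧ v = s then 1 else 0) := by
        simp only [sum_add_distrib, sum_sum_ite_eq_pair, mem_compl, cutIn, flowBtw, mul_sum]
        exact congrArg _ (if_congr and_comm rfl rfl)
    _ ≤ _ := by
        gcongr with u _ v _
        have := mul_nonneg hc (hx.nonneg u v)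
        split_ifs with hts
        · rw [hts.1, hts.2, hx.target_source_eq_zero, mul_zero, zero_add]
        all_goals linarith

theorem stmt9 (s t : V) (hst : s ≠ t) (x : V → V → ℝ) (hx : FeasLP s t x)
    (τ α : ℝ) (hτ0 : 0 < τ) (hτ : τ ≤ 1/4) (hα : 1 ≤ α)
    (𝒜 : Finset (V × V))
    (hthin : ∀ U : Finset V, U.Nonempty → U ≠ Finset.univ →
      ((𝒜.filter (fun a => a.1 ∈ U ∧ a.2 ∉ U)).card : ℝ) ≤ α * cutOut x U)
    (hnarrowOne : ∀ U : Finset V, NarrowCut s t x τ U →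
      (𝒜.filter (fun a => a.1 ∈ U ∧ a.2 ∉ U)).card = 1) :
    ∀ U : Finset V,
      (∑ u ∈ U, ∑ v ∈ Uᶜ, (if (u, v) ∈ 𝒜 ∨ (u = t ∧ v = s) then (1 : ℝ) else 0)) ≤
      (∑ u ∈ Uᶜ, ∑ v ∈ U, (if u = t ∧ v = s then (1 : ℝ)
        else if (u, v) ∈ 𝒜 then 1 + (1 + 1/τ) * α * x u v
        else (1 + 1/τ) * α * x u v)) :=
  stmt9_general s t x hx τ α hτ0 hα 𝒜 hthin hnarrowOne
end

section
/- In G_r, every walk from s to t that visits all vertices must use all of the arcs u_{i+1}u_i (1 ≤ i < r) or all of the arcs v_{i+1}v_i (1 ≤ i < r). -/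
open Finset

variable {V : Type*} [Fintype V] [DecidableEq V]

/-- Vertices of the gap instance `G_r`: `s`, `t`, `u₀,…,u_{r-1}`, `v₀,…,v_{r-1}`
(`u i` stands for `u_{i+1}` in 1-based paper notation). -/
inductive GapV (r : ℕ) where
  | s | t | u (i : Fin r) | v (i : Fin r)
  deriving DecidableEq, Fintype

/-- The arcs of `G_r`. -/
def isArc {r : ℕ} : GapV r → GapV r → Bool
  | .s, .u i => i.val = 0
  | .s, .v i => i.val = 0
  | .u i, .t => i.val = r - 1
  | .v i, .t => i.val = r - 1
  | .u i, .v j => i.val = 0 && j.val = r - 1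
  | .v i, .u j => i.val = 0 && j.val = r - 1
  | .u i, .u j => j.val + 1 = i.val || i.val + 1 = j.val
  | .v i, .v j => j.val + 1 = i.val || i.val + 1 = j.val
  | _, _ => false

/-- Arc costs in `G_r`: the arcs `s u₁`, `s v₁`, `u_r t`, `v_r t`, `u_{i+1} u_i`,
`v_{i+1} v_i` cost 1; all other arcs cost 0. -/
noncomputable def gapCost {r : ℕ} : GapV r → GapV r → ℝ
  | .s, .u _ => 1
  | .s, .v _ => 1
  | .u _, .t => 1
  | .v _, .t => 1
  | .u i, .u j => if j.val + 1 = i.val then 1 else 0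
  | .v i, .v j => if j.val + 1 = i.val then 1 else 0
  | _, _ => 0

/-- The half-integral LP solution: `1/2` on every arc of `G_r`, `0` elsewhere. -/
noncomputable def gapX (r : ℕ) : GapV r → GapV r → ℝ := fun a b => if isArc a b then 1/2 else 0

/-- A list of vertices is a walk in `G_r` iff consecutive entries are arcs. -/
def IsWalkList {r : ℕ} (w : List (GapV r)) : Prop :=
  List.Chain' (fun a b => isArc a b = true) w

/-- The walk `w` uses the arc `(a, b)`. -/
def usesArc {r : ℕ} (w : List (GapV r)) (a b : GapV r) : Prop :=
  ∃ n : ℕ, w[n]? = some a ∧ w[n + 1]? = some b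

/-!
Let `û` and `v̂` be the last vertices `u_r` and `v_r`, and suppose `û` occurs before the first
occurrence of `v̂`. From `û` the walk can neither reach `t` (which has no outgoing arc, while `v̂`
is still to come) nor jump to the `v`-side other than through the arc `u₁ v_r`, so until it first
reaches `v̂` it stays among the `u`-vertices, whose indices change by `±1` along arcs. These
indices descend from `r` to `1`, so every downward step `u_{i+1} u_i` is taken. The other case
follows by the symmetry exchanging the two sides.
-/

theorem Nat.exists_descent_step {f : ℕ → ℕ} {a b i : ℕ} (hab : a ≤ b)
    (hf : ∀ n, a ≤ n → n < b → f n ≤ f (n + 1) + 1) (ha : i < f a) (hb : f b ≤ i) :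
    ∃ n, a ≤ n ∧ n < b ∧ f n = i + 1 ∧ f (n + 1) = i := by
  induction b, hab using Nat.le_induction with
  | base => omega
  | succ b hab ih =>
    by_cases hfb : f b ≤ i
    · obtain ⟨n, hn⟩ := ih (fun n h₁ h₂ => hf n h₁ (by omega)) hfb
      exact ⟨n, hn.1, by omega, hn.2.2⟩
    · have := hf b hab (by omega)
      exact ⟨b, hab, by omega, by omega, by omega⟩

section GapInstance

variable {r : ℕ}

@[simp]
lemma isArc_u_u_iff {j k : Fin r} :
    isArc (.u j) (.u k) = true ↔ k.val + 1 = j.val ∨ j.val + 1 = k.val := by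
  simp [isArc]

@[simp]
lemma isArc_u_v_iff {j k : Fin r} : isArc (.u j) (.v k) = true ↔ j.val = 0 ∧ k.val = r - 1 := by
  simp [isArc]

@[simp]
lemma isArc_to_s (a : GapV r) : isArc a .s = false := by
  cases a <;> rfl

@[simp]
lemma isArc_from_t (b : GapV r) : isArc .t b = false := by
  cases b <;> rfl

namespace GapV

def swap : GapV r → GapV r
  | s => s
  | t => t
  | u i => v i
  | v i => u i

lemma swap_eq_iff {a b : GapV r} : a.swap = b ↔ a = b.swap := by
  cases a <;> cases b <;> simp [swap]

@[simp]
lemma isArc_swap (a b : GapV r) : isArc a.swap b.swap = isArc a b := by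
  cases a <;> cases b <;> rfl

lemma getElem?_map_swap_eq_some {w : List (GapV r)} {n : ℕ} {a : GapV r} :
    (w.map swap)[n]? = some a ↔ w[n]? = some a.swap := by
  rw [List.getElem?_map]
  cases w[n]? <;> simp [swap_eq_iff]

end GapV

namespace IsWalkList

variable {w : List (GapV r)}

lemma isArc_of_getElem? (hw : IsWalkList w) {n : ℕ} {a b : GapV r}
    (ha : w[n]? = some a) (hb : w[n + 1]? = some b) : isArc a b = true := by
  obtain ⟨hn, rfl⟩ := List.getElem?_eq_some_iff.mp ha
  obtain ⟨-, rfl⟩ := List.getElem?_eq_some_iff.mp hb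
  exact List.isChain_iff_getElem.mp hw n (by omega)

lemma map_swap (hw : IsWalkList w) : IsWalkList (w.map GapV.swap) :=
  (List.isChain_map _).mpr (hw.imp fun a b hab => by rwa [GapV.isArc_swap])

end IsWalkList

lemma usesArc_of_map_swap {w : List (GapV r)} {a b : GapV r}
    (h : usesArc (w.map GapV.swap) a b) : usesArc w a.swap b.swap := by
  obtain ⟨n, ha, hb⟩ := h
  exact ⟨n, GapV.getElem?_map_swap_eq_some.mp ha, GapV.getElem?_map_swap_eq_some.mp hb⟩

end GapInstance

section LastVertices

variable {k : ℕ} {w : List (GapV (k + 1))}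

lemma IsWalkList.exists_u_of_lt_first_v (hw : IsWalkList w) {p q : ℕ} {j : Fin (k + 1)}
    (hp : w[p]? = some (.u j)) (hq : q < w.length)
    (hv : ∀ m < q, w[m]? ≠ some (.v (Fin.last k))) :
    ∀ n, p ≤ n → n < q → ∃ j : Fin (k + 1), w[n]? = some (.u j) := by
  intro n hpn
  induction n, hpn using Nat.le_induction with
  | base => exact fun _ => ⟨j, hp⟩
  | succ n hpn ih =>
    intro hnq
    obtain ⟨j, hj⟩ := ih (by omega)
    obtain ⟨b, hb⟩ : ∃ b, w[n + 1]? = some b := ⟨_, List.getElem?_eq_getElem (by omega)⟩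
    have harc := hw.isArc_of_getElem? hj hb
    cases b with
    | s => simp at harc
    | t =>
      obtain ⟨c, hc⟩ : ∃ c, w[n + 1 + 1]? = some c := ⟨_, List.getElem?_eq_getElem (by omega)⟩
      simpa using hw.isArc_of_getElem? hb hc
    | u j' => exact ⟨j', hb⟩
    | v j' =>
      simp only [isArc_u_v_iff, Nat.add_sub_cancel] at harc
      have : j' = Fin.last k := Fin.ext harc.2
      exact absurd (this ▸ hb) (hv _ hnq)

lemma IsWalkList.usesArc_u_of_lt_first_v (hw : IsWalkList w) {p q : ℕ} (hpq : p < q)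
    (hp : w[p]? = some (.u (Fin.last k))) (hq : w[q]? = some (.v (Fin.last k)))
    (hv : ∀ m < q, w[m]? ≠ some (.v (Fin.last k))) (i : ℕ) (hi : i + 1 < k + 1) :
    usesArc w (.u ⟨i + 1, hi⟩) (.u ⟨i, by omega⟩) := by
  choose! level hlevel using
    hw.exists_u_of_lt_first_v hp (List.getElem?_eq_some_iff.mp hq).1 hv
  have hstart : level p = Fin.last k := by simpa using (hlevel p le_rfl hpq).symm.trans hp
  have hend : level (q - 1) = 0 := by
    have := hw.isArc_of_getElem? (hlevel (q - 1) (by omega) (by omega))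
      (by rwa [Nat.sub_add_cancel (by omega)])
    simpa using this
  obtain ⟨n, hpn, hnq, hn, hn1⟩ :=
    Nat.exists_descent_step (f := fun n => (level n).val) (i := i) (a := p) (b := q - 1)
      (by omega) (fun n h₁ h₂ => by
        have := hw.isArc_of_getElem? (hlevel n h₁ (by omega)) (hlevel (n + 1) (by omega) (by omega))
        rw [isArc_u_u_iff] at this
        omega)
      (by rw [hstart, Fin.val_last]; omega) (by simp [hend])
  refine ⟨n, ?_, ?_⟩
  · simp [hlevel n hpn (by omega), Fin.ext_iff, hn]
  · simp [hlevel (n + 1) (by omega) (by omega), Fin.ext_iff, hn1]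

end LastVertices

theorem stmt11_general (r : ℕ) (hr : 1 ≤ r) (w : List (GapV r))
    (hwalk : IsWalkList w)
    (hspan : ∀ a : GapV r, a ∈ w) :
    (∀ (i : ℕ) (h : i + 1 < r),
        usesArc w (GapV.u ⟨i + 1, h⟩) (GapV.u ⟨i, Nat.lt_of_succ_lt h⟩)) ∨
    (∀ (i : ℕ) (h : i + 1 < r),
        usesArc w (GapV.v ⟨i + 1, h⟩) (GapV.v ⟨i, Nat.lt_of_succ_lt h⟩)) := by
  obtain ⟨k, rfl⟩ : ∃ k, r = k + 1 := ⟨r - 1, by omega⟩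
  have hu := List.mem_iff_getElem?.mp (hspan (.u (Fin.last k)))
  have hv := List.mem_iff_getElem?.mp (hspan (.v (Fin.last k)))
  have hne : Nat.find hu ≠ Nat.find hv := fun h => by
    simpa [h, Nat.find_spec hv] using Nat.find_spec hu
  rcases hne.lt_or_gt with hlt | hgt
  · exact .inl (hwalk.usesArc_u_of_lt_first_v hlt (Nat.find_spec hu) (Nat.find_spec hv)
      (fun _ => Nat.find_min hv))
  · exact .inr fun i hi => usesArc_of_map_swap <| hwalk.map_swap.usesArc_u_of_lt_first_v hgt
      (GapV.getElem?_map_swap_eq_some.mpr (Nat.find_spec hv))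
      (GapV.getElem?_map_swap_eq_some.mpr (Nat.find_spec hu))
      (fun _ hm h => Nat.find_min hu hm (GapV.getElem?_map_swap_eq_some.mp h)) i hi

theorem stmt11 (r : ℕ) (hr : 1 ≤ r) (w : List (GapV r))
    (hwalk : IsWalkList w)
    (hhead : w.head? = some GapV.s) (hlast : w.getLast? = some GapV.t)
    (hspan : ∀ a : GapV r, a ∈ w) :
    (∀ (i : ℕ) (h : i + 1 < r),
        usesArc w (GapV.u ⟨i + 1, h⟩) (GapV.u ⟨i, Nat.lt_of_succ_lt h⟩)) ∨
    (∀ (i : ℕ) (h : i + 1 < r),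
        usesArc w (GapV.v ⟨i + 1, h⟩) (GapV.v ⟨i, Nat.lt_of_succ_lt h⟩)) :=
  stmt11_general r hr w hwalk hspan
end

section
/- Every spanning s-t walk in G_r uses all but at most one of the 2r − 2 unit-cost arcs {u_{i+1}u_i : 1 ≤ i < r} ∪ {v_{i+1}v_i : 1 ≤ i < r}, and hence has total cost at least 2r − 1. -/
open Finset

variable {V : Type*} [Fintype V] [DecidableEq V]

/-- The cost of a walk: sum of arc costs over consecutive pairs. -/
noncomputable def walkCost {r : ℕ} (w : List (GapV r)) : ℝ :=
  ((w.zip w.tail).map fun p => gapCost p.1 p.2).sum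

/-- `node true i = u i`, `node false i = v i`. -/
def node {r : ℕ} (c : Bool) (i : Fin r) : GapV r := if c then GapV.u i else GapV.v i

/-!
Write `c_k` for `node c k`. The only arcs between the two sides go from index `0` to index
`r - 1`. Hence, if a walk never uses the back arc `c_{i+1} c_i`, it can never leave
`{c_k : k > i} ∪ {t}` once it is there, and everything it visits before a vertex of
`{c_k : k ≤ i} ∪ {s}` lies in that set as well. If two back arcs on different sides are skipped,
each side's upper part has to be reached before the other's. If the back arcs at `i < j` on the
same side are both skipped, the walk is in the lower part for `j` before it reaches `c_{i+1}`
and in the upper part for `i` afterwards, so it never visits the other side. The cost bound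
counts the first arc, the last arc and the (at least `2r - 3`) back arcs used.
-/

lemma Fintype.card_le_card_filter_ne_add_one {α β : Type*} [Fintype α] [DecidableEq β] {g : α → β}
    (hg : Function.Injective g) (b : β) :
    Fintype.card α ≤ #(univ.filter fun a => g a ≠ b) + 1 := by
  have : #(univ.filter fun a => ¬ g a ≠ b) ≤ 1 :=
    card_le_one.mpr fun a ha a' ha' => hg (by simp_all)
  have := card_filter_add_card_filter_not (s := univ) fun a => g a ≠ b
  rw [card_univ] at this
  omega

namespace GapV

variable {r : ℕ}

lemma node_ne_s (c : Bool) (k : Fin r) : node c k ≠ s := by cases c <;> simp [node]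

lemma node_ne_t (c : Bool) (k : Fin r) : node c k ≠ t := by cases c <;> simp [node]

lemma node_injective {c c' : Bool} {k k' : Fin r} (h : node c k = node c' k') :
    c = c' ∧ k = k' := by
  cases c <;> cases c' <;> simp_all [node]

def upperPart (c : Bool) (i : ℕ) : Set (GapV r) :=
  {x | x = t ∨ ∃ k : Fin r, i < k ∧ x = node c k}

def lowerPart (c : Bool) (i : ℕ) : Set (GapV r) :=
  {x | x = s ∨ ∃ k : Fin r, k ≤ i ∧ x = node c k}

lemma mem_upperPart_of_isArc {c : Bool} {i : ℕ} (hi : i + 1 < r) {x y : GapV r}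
    (hxy : isArc x y) (hne : (x, y) ≠ (node c ⟨i + 1, hi⟩, node c ⟨i, by omega⟩))
    (hx : x ∈ upperPart c i) : y ∈ upperPart c i := by
  rcases hx with rfl | ⟨k, hik, rfl⟩
  · cases y <;> simp [isArc] at hxy
  · cases c <;> cases y <;> simp_all [upperPart, isArc, node, Fin.ext_iff] <;>
      first | omega | exact ⟨_, by omega, rfl⟩

lemma mem_lowerPart_of_isArc {c : Bool} {i : ℕ} (hi : i + 1 < r) {x y : GapV r}
    (hxy : isArc x y) (hne : (x, y) ≠ (node c ⟨i + 1, hi⟩, node c ⟨i, by omega⟩))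
    (hy : y ∈ lowerPart c i) : x ∈ lowerPart c i := by
  rcases hy with rfl | ⟨k, hik, rfl⟩
  · cases x <;> simp [isArc] at hxy
  · cases c <;> cases x <;> simp_all [lowerPart, isArc, node, Fin.ext_iff] <;>
      first | omega | exact ⟨_, by omega, rfl⟩

lemma node_notMem_upperPart {c c' : Bool} (hc : c' ≠ c) (i : ℕ) (k : Fin r) :
    node c' k ∉ upperPart c i := by
  rintro (h | ⟨k', -, h⟩)
  · exact node_ne_t _ _ h
  · exact hc (node_injective h).1

lemma node_notMem_lowerPart {c c' : Bool} (hc : c' ≠ c) (i : ℕ) (k : Fin r) :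
    node c' k ∉ lowerPart c i := by
  rintro (h | ⟨k', -, h⟩)
  · exact node_ne_s _ _ h
  · exact hc (node_injective h).1

section Walk

variable {w : List (GapV r)}

lemma usesArc_of_getElem {a b : GapV r} {n : ℕ} (hn : n + 1 < w.length)
    (ha : w[n] = a) (hb : w[n + 1] = b) : usesArc w a b :=
  ⟨n, List.getElem?_eq_some_iff.mpr ⟨_, ha⟩, List.getElem?_eq_some_iff.mpr ⟨hn, hb⟩⟩

lemma isArc_of_usesArc (hw : IsWalkList w) {a b : GapV r} (h : usesArc w a b) : isArc a b := by
  obtain ⟨n, ha, hb⟩ := h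
  obtain ⟨hn, rfl⟩ := List.getElem?_eq_some_iff.mp hb
  obtain ⟨-, rfl⟩ := List.getElem?_eq_some_iff.mp ha
  exact List.isChain_iff_getElem.mp hw n hn

lemma getElem_mem_of_le {S : Set (GapV r)} (hS : ∀ a b, usesArc w a b → a ∈ S → b ∈ S)
    {m m' : ℕ} (hmm' : m ≤ m') (hm' : m' < w.length) (hm : w[m] ∈ S) : w[m'] ∈ S := by
  induction m', hmm' using Nat.le_induction with
  | base => exact hm
  | succ n _ ih => exact hS _ _ (usesArc_of_getElem hm' rfl rfl) (ih (by omega) hm)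

variable {c : Bool} {i : ℕ} {hi : i + 1 < r}

lemma lt_of_not_usesArc_of_mem_upperPart (hw : IsWalkList w)
    (hmiss : ¬ usesArc w (node c ⟨i + 1, hi⟩) (node c ⟨i, Nat.lt_of_succ_lt hi⟩))
    {c' : Bool} (hc : c' ≠ c) {k : Fin r} {m m' : ℕ} (hm : m < w.length) (hm' : m' < w.length)
    (hx : w[m] ∈ upperPart c i) (hy : w[m'] = node c' k) : m' < m := by
  by_contra! hle
  refine node_notMem_upperPart hc i k (hy ▸ getElem_mem_of_le (fun a b hab ha => ?_) hle hm' hx)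
  exact mem_upperPart_of_isArc hi (isArc_of_usesArc hw hab) (by rintro ⟨⟩; exact hmiss hab) ha

lemma lt_of_not_usesArc_of_mem_lowerPart (hw : IsWalkList w)
    (hmiss : ¬ usesArc w (node c ⟨i + 1, hi⟩) (node c ⟨i, Nat.lt_of_succ_lt hi⟩))
    {c' : Bool} (hc : c' ≠ c) {k : Fin r} {m m' : ℕ} (hm : m < w.length) (hm' : m' < w.length)
    (hx : w[m] ∈ lowerPart c i) (hy : w[m'] = node c' k) : m < m' := by
  by_contra! hle
  refine getElem_mem_of_le (S := (lowerPart c i)ᶜ) (fun a b hab hb ha => hb ?_) hle hm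
    (hy ▸ node_notMem_lowerPart hc i k) hx
  exact mem_lowerPart_of_isArc hi (isArc_of_usesArc hw hab) (by rintro ⟨⟩; exact hmiss hab) ha

theorem eq_of_not_usesArc_back (hw : IsWalkList w) (hspan : ∀ a : GapV r, a ∈ w)
    (hmiss : ¬ usesArc w (node c ⟨i + 1, hi⟩) (node c ⟨i, Nat.lt_of_succ_lt hi⟩))
    {c' : Bool} {i' : ℕ} {hi' : i' + 1 < r}
    (hmiss' : ¬ usesArc w (node c' ⟨i' + 1, hi'⟩) (node c' ⟨i', Nat.lt_of_succ_lt hi'⟩)) :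
    (c, i) = (c', i') := by
  by_contra hne
  obtain ⟨m, hm, hx⟩ := List.mem_iff_getElem.mp (hspan (node c ⟨i + 1, hi⟩))
  obtain ⟨m', hm', hx'⟩ := List.mem_iff_getElem.mp (hspan (node c' ⟨i' + 1, hi'⟩))
  have hup : w[m] ∈ upperPart c i := Or.inr ⟨_, Nat.lt_succ_self i, hx⟩
  have hup' : w[m'] ∈ upperPart c' i' := Or.inr ⟨_, Nat.lt_succ_self i', hx'⟩
  obtain rfl | hc := eq_or_ne c c'
  · obtain ⟨p, hp, hy⟩ := List.mem_iff_getElem.mp (hspan (node (!c) ⟨0, by omega⟩))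
    have hnc := Bool.not_ne_self c
    rcases Nat.lt_or_gt_of_ne fun h : i = i' => hne (h ▸ rfl) with hlt | hlt
    · have := lt_of_not_usesArc_of_mem_upperPart hw hmiss hnc hm hp hup hy
      have := lt_of_not_usesArc_of_mem_lowerPart hw hmiss' hnc hm hp
        (Or.inr ⟨⟨i + 1, hi⟩, hlt, hx⟩) hy
      omega
    · have := lt_of_not_usesArc_of_mem_upperPart hw hmiss' hnc hm' hp hup' hy
      have := lt_of_not_usesArc_of_mem_lowerPart hw hmiss hnc hm' hp
        (Or.inr ⟨⟨i' + 1, hi'⟩, hlt, hx'⟩) hy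
      omega
  · have := lt_of_not_usesArc_of_mem_upperPart hw hmiss hc.symm hm hm' hup hx'
    have := lt_of_not_usesArc_of_mem_upperPart hw hmiss' hc hm' hm hup' hx
    omega

theorem exists_forall_ne_usesArc_back (hw : IsWalkList w) (hspan : ∀ a : GapV r, a ∈ w) :
    ∃ (c₀ : Bool) (i₀ : ℕ), ∀ (c : Bool) (i : ℕ) (h : i + 1 < r),
      (c, i) ≠ (c₀, i₀) → usesArc w (node c ⟨i + 1, h⟩) (node c ⟨i, Nat.lt_of_succ_lt h⟩) := by
  by_cases hall : ∀ (c : Bool) (i : ℕ) (h : i + 1 < r),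
      usesArc w (node c ⟨i + 1, h⟩) (node c ⟨i, Nat.lt_of_succ_lt h⟩)
  · exact ⟨true, 0, fun c i h _ => hall c i h⟩
  · simp only [not_forall] at hall
    obtain ⟨c₀, i₀, h₀, hmiss₀⟩ := hall
    exact ⟨c₀, i₀, fun c i h hne =>
      by_contra fun hmiss => hne (eq_of_not_usesArc_back hw hspan hmiss hmiss₀)⟩

end Walk

lemma gapCost_nonneg (a b : GapV r) : 0 ≤ gapCost a b := by
  cases a <;> cases b <;> simp only [gapCost] <;> try split_ifs
  all_goals norm_num

lemma gapCost_s_of_isArc {b : GapV r} (h : isArc s b) : gapCost s b = 1 := by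
  cases b <;> simp_all [isArc, gapCost]

lemma gapCost_t_of_isArc {a : GapV r} (h : isArc a t) : gapCost a t = 1 := by
  cases a <;> simp_all [isArc, gapCost]

def backArc (q : Bool × Fin (r - 1)) : GapV r × GapV r :=
  (node q.1 ⟨q.2 + 1, by omega⟩, node q.1 ⟨q.2, by omega⟩)

lemma backArc_injective : Function.Injective (backArc (r := r)) := by
  intro q q' h
  obtain ⟨hc, hk⟩ := node_injective (Prod.ext_iff.mp h).2
  exact Prod.ext hc (Fin.ext (by simpa using congrArg Fin.val hk))

lemma gapCost_backArc (q : Bool × Fin (r - 1)) : gapCost (backArc q).1 (backArc q).2 = 1 := by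
  obtain ⟨c, i⟩ := q
  cases c <;> simp [backArc, node, gapCost]

section Cost

variable {w : List (GapV r)}

lemma mem_zip_tail_of_usesArc {a b : GapV r} (h : usesArc w a b) : (a, b) ∈ w.zip w.tail := by
  obtain ⟨n, ha, hb⟩ := h
  exact List.mem_of_getElem? (List.getElem?_zip_eq_some.mpr ⟨ha, by simpa using hb⟩)

lemma card_le_walkCost {A : Finset (GapV r × GapV r)}
    (hA : ∀ p ∈ A, usesArc w p.1 p.2 ∧ gapCost p.1 p.2 = 1) : (#A : ℝ) ≤ walkCost w := by
  set l := w.zip w.tail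
  calc (#A : ℝ) = ∑ p ∈ A, gapCost p.1 p.2 := by
        rw [sum_congr rfl fun p hp => (hA p hp).2]; simp
    _ ≤ ∑ p ∈ l.toFinset, gapCost p.1 p.2 :=
        sum_le_sum_of_subset_of_nonneg
          (fun p hp => List.mem_toFinset.mpr (mem_zip_tail_of_usesArc (hA p hp).1))
          fun _ _ _ => gapCost_nonneg _ _
    _ ≤ walkCost w := by
        rw [walkCost, sum_list_map_count]
        refine sum_le_sum fun p hp => le_smul_of_one_le_left (gapCost_nonneg _ _) ?_
        simpa [List.count_pos_iff] using hp

lemma one_lt_length_of_head?_of_getLast? {a b : GapV r} (ha : w.head? = some a)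
    (hb : w.getLast? = some b) (hab : a ≠ b) : 1 < w.length := by
  rcases w with _ | ⟨x, _ | ⟨y, l⟩⟩ <;> simp_all

lemma exists_usesArc_of_head? {a : GapV r} (ha : w.head? = some a) (hw : 1 < w.length) :
    ∃ b, usesArc w a b := by
  rw [List.head?_eq_getElem?, List.getElem?_eq_some_iff] at ha
  exact ⟨w[1], usesArc_of_getElem (n := 0) hw ha.2 rfl⟩

lemma exists_usesArc_of_getLast? {b : GapV r} (hb : w.getLast? = some b) (hw : 1 < w.length) :
    ∃ a, usesArc w a b := by
  rw [List.getLast?_eq_getElem?, List.getElem?_eq_some_iff] at hb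
  have hidx : w.length - 2 + 1 = w.length - 1 := by omega
  exact ⟨w[w.length - 2], usesArc_of_getElem (by omega) rfl (by simpa [hidx] using hb.2)⟩

theorem two_mul_sub_one_le_walkCost (hw : IsWalkList w) (hhead : w.head? = some s)
    (hlast : w.getLast? = some t) {c₀ : Bool} {i₀ : ℕ}
    (hused : ∀ (c : Bool) (i : ℕ) (h : i + 1 < r), (c, i) ≠ (c₀, i₀) →
      usesArc w (node c ⟨i + 1, h⟩) (node c ⟨i, Nat.lt_of_succ_lt h⟩)) :
    2 * (r : ℝ) - 1 ≤ walkCost w := by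
  have hlen := one_lt_length_of_head?_of_getLast? hhead hlast (by simp)
  obtain ⟨b, hb⟩ := exists_usesArc_of_head? hhead hlen
  obtain ⟨a, ha⟩ := exists_usesArc_of_getLast? hlast hlen
  set Q := univ.filter fun q : Bool × Fin (r - 1) => (q.1, q.2.val) ≠ (c₀, i₀)
  have hQ : 2 * (r - 1) ≤ #Q + 1 := by
    have := Fintype.card_le_card_filter_ne_add_one (g := fun q : Bool × Fin (r - 1) => (q.1, q.2.val))
      (fun q q' h => Prod.ext (Prod.ext_iff.mp h).1 (Fin.ext (Prod.ext_iff.mp h).2)) (c₀, i₀)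
    rwa [Fintype.card_prod, Fintype.card_bool, Fintype.card_fin] at this
  have ht : (a, t) ∉ Q.image backArc := by
    simp [backArc, node_ne_t]
  have hs : (s, b) ∉ insert (a, t) (Q.image backArc) := by
    have : b ≠ t := by rintro rfl; simpa [isArc] using isArc_of_usesArc hw hb
    simp [backArc, this, node_ne_s]
  calc 2 * (r : ℝ) - 1 ≤ #(insert (s, b) (insert (a, t) (Q.image backArc))) := by
        rw [card_insert_of_notMem hs, card_insert_of_notMem ht,
          card_image_of_injective _ backArc_injective]
        have : (r : ℝ) - 1 ≤ ((r - 1 : ℕ) : ℝ) := by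
          rcases Nat.eq_zero_or_pos r with rfl | hr
          · simp
          · rw [Nat.cast_sub hr]; simp
        have hQ' : 2 * ((r - 1 : ℕ) : ℝ) ≤ #Q + 1 := by exact_mod_cast hQ
        push_cast
        linarith
    _ ≤ walkCost w := by
        refine card_le_walkCost fun p hp => ?_
        simp only [mem_insert, mem_image] at hp
        rcases hp with rfl | rfl | ⟨q, hq, rfl⟩
        · exact ⟨hb, gapCost_s_of_isArc (isArc_of_usesArc hw hb)⟩
        · exact ⟨ha, gapCost_t_of_isArc (isArc_of_usesArc hw ha)⟩
        · refine ⟨hused q.1 q.2 (by omega) (mem_filter.mp hq).2, gapCost_backArc q⟩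

end Cost

end GapV

theorem stmt12_general (r : ℕ) (w : List (GapV r))
    (hwalk : IsWalkList w)
    (hhead : w.head? = some GapV.s) (hlast : w.getLast? = some GapV.t)
    (hspan : ∀ a : GapV r, a ∈ w) :
    (∃ (c₀ : Bool) (i₀ : ℕ), ∀ (c : Bool) (i : ℕ) (h : i + 1 < r),
        (c, i) ≠ (c₀, i₀) →
        usesArc w (node c ⟨i + 1, h⟩) (node c ⟨i, Nat.lt_of_succ_lt h⟩)) ∧
    2 * (r : ℝ) - 1 ≤ walkCost w := by
  obtain ⟨c₀, i₀, hused⟩ := GapV.exists_forall_ne_usesArc_back hwalk hspan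
  exact ⟨⟨c₀, i₀, hused⟩, GapV.two_mul_sub_one_le_walkCost hwalk hhead hlast hused⟩

theorem stmt12 (r : ℕ) (hr : 1 ≤ r) (w : List (GapV r))
    (hwalk : IsWalkList w)
    (hhead : w.head? = some GapV.s) (hlast : w.getLast? = some GapV.t)
    (hspan : ∀ a : GapV r, a ∈ w) :
    (∃ (c₀ : Bool) (i₀ : ℕ), ∀ (c : Bool) (i : ℕ) (h : i + 1 < r),
        (c, i) ≠ (c₀, i₀) →
        usesArc w (node c ⟨i + 1, h⟩) (node c ⟨i, Nat.lt_of_succ_lt h⟩)) ∧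
    2 * (r : ℝ) - 1 ≤ walkCost w :=
  stmt12_general r w hwalk hhead hlast hspan
end

section
/- Let y be a point of the spanning tree polytope of an undirected multigraph H = (V,E) such that the minimum cut value of y is 1 (y(∂(U)) ≥ 1 for all nonempty proper U). Suppose a random spanning tree T satisfies Pr[e ∈ T] = y_e for each edge and negative correlation Pr[F ⊆ T] ≤ Π_{e∈F} Pr[e ∈ T] for all F ⊆ E. Then for any fixed cut U and β = 6·log n/log log n (natural log, n = |V| sufficiently large), Pr[|T ∩ ∂(U)| ≥ β·y(∂(U))] ≤ n^{−5·y(∂(U))}. -/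
open Finset
open scoped Classical

/-- The edges of the multigraph (with endpoint map `ends`) crossing the cut `U`. -/
noncomputable def cutEdges {V E : Type} [Fintype E] [DecidableEq V]
    (ends : E → V × V) (U : Finset V) : Finset E :=
  Finset.univ.filter (fun e =>
    ((ends e).1 ∈ U ∧ (ends e).2 ∉ U) ∨ ((ends e).1 ∉ U ∧ (ends e).2 ∈ U))

/-- `T` is (the edge set of) a spanning tree of the multigraph on `V` with
edge type `E` and endpoints `ends`: it has `|V| - 1` edges and connects all vertices. -/
def IsSpanningTree {V E : Type} [Fintype V] (ends : E → V × V) (T : Finset E) : Prop :=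
  T.card + 1 = Fintype.card V ∧
  ∀ a b : V, Relation.ReflTransGen
    (fun u v => ∃ e ∈ T, ends e = (u, v) ∨ ends e = (v, u)) a b

lemma aux_prod_indicator {E : Type} [DecidableEq E] (F T : Finset E) :
    (∏ e ∈ F, (if e ∈ T then (1:ℝ) else 0)) = if F ⊆ T then 1 else 0 := by
  by_cases h : F ⊆ T
  · rw [if_pos h]; exact Finset.prod_eq_one fun e he => if_pos (h he)
  · rw [if_neg h]
    obtain ⟨e, heF, heT⟩ := Finset.not_subset.mp h
    exact Finset.prod_eq_zero heF (if_neg heT)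

lemma aux_expand_pow {E : Type} [DecidableEq E] (S T : Finset E) (c : ℝ) :
    (1 + c) ^ (T ∩ S).card
      = ∑ F ∈ S.powerset, c ^ F.card * (if F ⊆ T then (1:ℝ) else 0) := by
  have key : ∀ F ∈ S.powerset,
      (∏ e ∈ F, (c * (if e ∈ T then (1:ℝ) else 0))) * ∏ e ∈ S \ F, (1:ℝ)
      = c ^ F.card * (if F ⊆ T then 1 else 0) := by
    intro F _
    rw [Finset.prod_const_one, mul_one, Finset.prod_mul_distrib, Finset.prod_const,
      aux_prod_indicator]
  rw [← Finset.sum_congr rfl key, ← Finset.prod_add]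
  rw [← Finset.prod_filter_mul_prod_filter_not S (· ∈ T)]
  have h1 : ∀ e ∈ S.filter (· ∈ T), (c * (if e ∈ T then (1:ℝ) else 0) + 1) = 1 + c := by
    intro e he; rw [if_pos (Finset.mem_filter.mp he).2]; ring
  have h2 : ∀ e ∈ S.filter (¬ · ∈ T), (c * (if e ∈ T then (1:ℝ) else 0) + 1) = 1 := by
    intro e he; rw [if_neg (Finset.mem_filter.mp he).2]; ring
  rw [Finset.prod_congr rfl h1, Finset.prod_congr rfl h2, Finset.prod_const_one, mul_one,
    Finset.prod_const]
  congr 1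
  rw [Finset.filter_mem_eq_inter, Finset.inter_comm]

lemma aux_main_ineq (x : ℝ) (hx : Real.exp (Real.exp 144) ≤ x) :
    1 < 6 * Real.log x / Real.log (Real.log x) ∧
    6 * Real.log x / Real.log (Real.log x) -
      (6 * Real.log x / Real.log (Real.log x)) *
        Real.log (6 * Real.log x / Real.log (Real.log x)) ≤ -(5 * Real.log x) := by
  have hxpos : (0:ℝ) < x := lt_of_lt_of_le (Real.exp_pos _) hx
  set L := Real.log x with hLdef
  have hL : Real.exp 144 ≤ L := by
    have := Real.log_le_log (Real.exp_pos _) hx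
    simpa using this
  have hLpos : 0 < L := lt_of_lt_of_le (Real.exp_pos _) hL
  set v := Real.log L with hvdef
  have hv : (144:ℝ) ≤ v := by
    have := Real.log_le_log (Real.exp_pos _) hL
    simpa using this
  have hvpos : (0:ℝ) < v := by linarith
  have hLv : L = Real.exp v := (Real.exp_log hLpos).symm
  set β := 6 * L / v with hβdef
  have hβ1 : 1 < β := by
    rw [hβdef, lt_div_iff₀ hvpos, one_mul]
    have h1 : v + 1 ≤ Real.exp v := Real.add_one_le_exp v
    nlinarith
  have hβpos : 0 < β := lt_trans one_pos hβ1
  have hsq : (12:ℝ) ≤ Real.sqrt v := by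
    have : Real.sqrt 144 ≤ Real.sqrt v := Real.sqrt_le_sqrt hv
    rwa [show (144:ℝ) = 12^2 by norm_num, Real.sqrt_sq (by norm_num)] at this
  have hsqpos : 0 < Real.sqrt v := by linarith
  have hsqmul : Real.sqrt v * Real.sqrt v = v := Real.mul_self_sqrt hvpos.le
  have hlogv : Real.log v ≤ v / 6 := by
    have h1 : Real.log (Real.sqrt v) ≤ Real.sqrt v - 1 :=
      Real.log_le_sub_one_of_pos hsqpos
    have h2 : Real.log v = 2 * Real.log (Real.sqrt v) := by
      rw [Real.log_sqrt hvpos.le]; ring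
    nlinarith
  have hlog6 : (1:ℝ) ≤ Real.log 6 := by
    rw [Real.le_log_iff_exp_le (by norm_num : (0:ℝ) < 6)]
    linarith [Real.exp_one_lt_d9]
  have hlogβ : (5/6) * v + 1 ≤ Real.log β := by
    rw [hβdef, Real.log_div (by positivity) (ne_of_gt hvpos),
      Real.log_mul (by norm_num) (ne_of_gt hLpos)]
    rw [← hvdef]
    linarith
  refine ⟨hβ1, ?_⟩
  have h1 : β * ((5/6) * v + 1) ≤ β * Real.log β :=
    mul_le_mul_of_nonneg_left hlogβ hβpos.le
  have h2 : β * v = 6 * L := by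
    rw [hβdef]; field_simp
  nlinarith

theorem stmt16 :
    ∃ N : ℕ, ∀ (V E : Type) [Fintype V] [DecidableEq V] [Fintype E] [DecidableEq E]
      (ends : E → V × V) (y : E → ℝ) (p : Finset E → ℝ),
      N ≤ Fintype.card V →
      (∀ e, 0 ≤ y e) →
      (∀ T, 0 ≤ p T) →
      (∑ T : Finset E, p T = 1) →
      (∀ T : Finset E, p T ≠ 0 → IsSpanningTree ends T) →
      -- correct marginals: Pr[e ∈ T] = y_e
      (∀ e : E, ∑ T ∈ Finset.univ.filter (fun T : Finset E => e ∈ T), p T = y e) →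
      -- negative correlation
      (∀ F : Finset E,
        ∑ T ∈ Finset.univ.filter (fun T : Finset E => F ⊆ T), p T ≤ ∏ e ∈ F, y e) →
      -- the minimum cut value of y is at least 1
      (∀ U : Finset V, U.Nonempty → U ≠ Finset.univ →
        1 ≤ ∑ e ∈ cutEdges ends U, y e) →
      ∀ U : Finset V, U.Nonempty → U ≠ Finset.univ →
        ∑ T ∈ Finset.univ.filter (fun T : Finset E =>
            (6 * Real.log (Fintype.card V) / Real.log (Real.log (Fintype.card V))) *
              (∑ e ∈ cutEdges ends U, y e) ≤ ((T ∩ cutEdges ends U).card : ℝ)), p T ≤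
          (Fintype.card V : ℝ) ^ (-(5 : ℝ) * ∑ e ∈ cutEdges ends U, y e) := by
  use ⌈Real.exp (Real.exp 144)⌉₊
  intro V E _ _ _ _ ends y p hN hy hp hsum _ hmarg hneg hcut U hU1 hU2
  set n : ℕ := Fintype.card V with hn
  have hx : Real.exp (Real.exp 144) ≤ (n : ℝ) :=
    le_trans (Nat.le_ceil _) (by exact_mod_cast hN)
  have hnpos : (0:ℝ) < (n:ℝ) := lt_of_lt_of_le (Real.exp_pos _) hx
  set S : Finset E := cutEdges ends U with hS
  set μ : ℝ := ∑ e ∈ S, y e with hμdef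
  have hμ : 1 ≤ μ := hcut U hU1 hU2
  have hμ0 : 0 ≤ μ := by linarith
  obtain ⟨hβ1, hβ2⟩ := aux_main_ineq (n : ℝ) hx
  set L : ℝ := Real.log (n : ℝ) with hL
  set β : ℝ := 6 * L / Real.log L with hβdef
  have hβpos : 0 < β := lt_trans one_pos hβ1
  set c : ℝ := β - 1 with hc
  have hcpos : 0 < c := by rw [hc]; linarith
  have hβc : β = 1 + c := by rw [hc]; ring
  -- MGF bound
  have hMGF : ∑ T : Finset E, p T * β ^ (T ∩ S).card ≤ Real.exp (c * μ) := by
    calc ∑ T : Finset E, p T * β ^ (T ∩ S).card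
        = ∑ F ∈ S.powerset, c ^ F.card *
            ∑ T ∈ Finset.univ.filter (fun T : Finset E => F ⊆ T), p T := by
          have hexp : ∀ T : Finset E, p T * β ^ (T ∩ S).card
              = ∑ F ∈ S.powerset, p T * (c ^ F.card * if F ⊆ T then (1:ℝ) else 0) := by
            intro T
            rw [hβc, aux_expand_pow, Finset.mul_sum]
          rw [Finset.sum_congr rfl fun T _ => hexp T, Finset.sum_comm]
          refine Finset.sum_congr rfl fun F _ => ?_
          rw [Finset.sum_filter, Finset.mul_sum]
          refine Finset.sum_congr rfl fun T _ => ?_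
          by_cases h : F ⊆ T
          · simp only [if_pos h]; ring
          · simp only [if_neg h]; ring
      _ ≤ ∑ F ∈ S.powerset, c ^ F.card * ∏ e ∈ F, y e := by
          refine Finset.sum_le_sum fun F _ => ?_
          exact mul_le_mul_of_nonneg_left (hneg F) (pow_nonneg hcpos.le _)
      _ = ∏ e ∈ S, (c * y e + 1) := by
          rw [Finset.prod_add]
          refine Finset.sum_congr rfl fun F _ => ?_
          rw [Finset.prod_const_one, mul_one, Finset.prod_mul_distrib, Finset.prod_const]
      _ ≤ ∏ e ∈ S, Real.exp (c * y e) := by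
          refine Finset.prod_le_prod (fun e _ => by nlinarith [mul_nonneg hcpos.le (hy e)]) fun e _ => ?_
          have := Real.add_one_le_exp (c * y e)
          linarith
      _ = Real.exp (c * μ) := by
          rw [← Real.exp_sum, hμdef, Finset.mul_sum]
  -- Markov
  have hmarkov : ∑ T ∈ Finset.univ.filter
        (fun T : Finset E => β * μ ≤ ((T ∩ S).card : ℝ)), p T
      ≤ β ^ (-(β * μ)) * Real.exp (c * μ) := by
    calc ∑ T ∈ Finset.univ.filter (fun T : Finset E => β * μ ≤ ((T ∩ S).card : ℝ)), p T
        ≤ ∑ T ∈ Finset.univ.filter (fun T : Finset E => β * μ ≤ ((T ∩ S).card : ℝ)),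
            β ^ (-(β * μ)) * (p T * β ^ (T ∩ S).card) := by
          refine Finset.sum_le_sum fun T hT => ?_
          have hTc : β * μ ≤ ((T ∩ S).card : ℝ) := (Finset.mem_filter.mp hT).2
          have h1 : β ^ (β * μ) ≤ β ^ (((T ∩ S).card : ℕ) : ℝ) :=
            (Real.rpow_le_rpow_left_iff hβ1).mpr hTc
          have h2 : (1:ℝ) ≤ β ^ (-(β * μ)) * β ^ (T ∩ S).card := by
            have h3 : β ^ ((T ∩ S).card : ℕ) = β ^ (((T ∩ S).card : ℕ) : ℝ) :=
              (Real.rpow_natCast β _).symm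
            calc (1:ℝ) = β ^ (-(β * μ) + β * μ) := by rw [neg_add_cancel, Real.rpow_zero]
              _ = β ^ (-(β * μ)) * β ^ (β * μ) := Real.rpow_add hβpos _ _
              _ ≤ β ^ (-(β * μ)) * β ^ ((T ∩ S).card : ℕ) := by
                  rw [h3]
                  exact mul_le_mul_of_nonneg_left h1 (Real.rpow_nonneg hβpos.le _)
          calc p T = 1 * p T := (one_mul _).symm
            _ ≤ (β ^ (-(β * μ)) * β ^ (T ∩ S).card) * p T :=
                mul_le_mul_of_nonneg_right h2 (hp T)
            _ = β ^ (-(β * μ)) * (p T * β ^ (T ∩ S).card) := by ring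
      _ ≤ ∑ T : Finset E, β ^ (-(β * μ)) * (p T * β ^ (T ∩ S).card) := by
          refine Finset.sum_le_sum_of_subset_of_nonneg (Finset.filter_subset _ _)
            fun T _ _ => mul_nonneg (Real.rpow_nonneg hβpos.le _)
              (mul_nonneg (hp T) (pow_nonneg hβpos.le _))
      _ = β ^ (-(β * μ)) * ∑ T : Finset E, p T * β ^ (T ∩ S).card :=
          (Finset.mul_sum _ _ _).symm
      _ ≤ β ^ (-(β * μ)) * Real.exp (c * μ) :=
          mul_le_mul_of_nonneg_left hMGF (Real.rpow_nonneg hβpos.le _)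
  -- final computation
  refine le_trans hmarkov ?_
  rw [Real.rpow_def_of_pos hβpos, ← Real.exp_add, Real.rpow_def_of_pos hnpos]
  rw [Real.exp_le_exp]
  have hmul := mul_le_mul_of_nonneg_left hβ2 hμ0
  rw [hc]
  nlinarith
end
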